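/- arXiv:2001.07057 — 4 statements merged into one kernel-verified Lean document; each statement's English description precedes it below -/
import Mathlib

section
/- Let A ∈ ℝ^{n×n} be invertible and BK ∈ ℝ^{n×n}. For δ ∈ (0,1) define g^δ(s) = ((e^{sA} − I)/δ − (1/2)A)(I − A^{−1}BK). Then for every r ∈ (0, δ], |∫_0^r g^δ(s) ds| ≤ ((r²/6)|A|² e^{|A|} + (1/2)|r − δ| |A|) · |I − A^{−1}BK|. In particular, |∫_0^δ g^δ(s) ds| ≤ (δ²/6)|A|² e^{|A|} |I − A^{−1}BK|. -/
/-!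
Write `g^δ(s) = (δ⁻¹ (e^{sA} − I − sA) + (δ⁻¹ s − 1/2) A)(I − A⁻¹BK)`. For `0 ≤ s ≤ 1` the
Taylor remainder obeys `‖e^{sA} − I − sA‖ ≤ (s²/2)‖A‖² e^{‖A‖}`, so the first part integrates over
`[0, r]` to at most `δ⁻¹ (r³/6)‖A‖² e^{‖A‖} ≤ (r²/6)‖A‖² e^{‖A‖}`, while the linear part integrates
exactly to `(r/δ) · (r − δ)/2 · A`, of norm at most `|r − δ| ‖A‖ / 2`.
-/

noncomputable section

abbrev Euc (n : ℕ) := EuclideanSpace ℝ (Fin n)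
abbrev Mat (n : ℕ) := Euc n →L[ℝ] Euc n

open NormedSpace
open scoped Nat

section

variable {𝔸 : Type*} [NormedRing 𝔸] [NormedAlgebra ℝ 𝔸]

/-- The paper's `g^δ(s)` without its right factor `I − A⁻¹BK`. -/
def gDelta (δ : ℝ) (a : 𝔸) (s : ℝ) : 𝔸 := δ⁻¹ • (exp (s • a) - 1) - (2:ℝ)⁻¹ • a

theorem gDelta_eq (δ s : ℝ) (a : 𝔸) :
    gDelta δ a s = δ⁻¹ • (exp (s • a) - 1 - s • a) + (δ⁻¹ * s - 2⁻¹) • a := by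
  rw [gDelta, smul_sub _ _ (s • a), smul_smul, sub_smul]
  abel

variable [CompleteSpace 𝔸]

theorem norm_exp_sub_one_sub_le (x : 𝔸) :
    ‖exp x - 1 - x‖ ≤ ‖x‖ ^ 2 / 2 * Real.exp ‖x‖ := by
  have htail : exp x - 1 - x = ∑' n, ((n + 2)! : ℝ)⁻¹ • x ^ (n + 2) := by
    rw [congrFun (exp_eq_tsum ℝ) x, ← (expSeries_summable' (𝕂 := ℝ) x).sum_add_tsum_nat_add 2]
    simp [Finset.sum_range_succ]
    abel
  have hsum : HasSum (fun n : ℕ => ‖x‖ ^ 2 / 2 * (‖x‖ ^ n / n !))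
      (‖x‖ ^ 2 / 2 * Real.exp ‖x‖) := by
    rw [Real.exp_eq_exp_ℝ]
    exact (expSeries_div_hasSum_exp ‖x‖).mul_left _
  rw [htail]
  refine tsum_of_norm_bounded hsum fun n => ?_
  have hfact : ((2 * n ! : ℕ) : ℝ) ≤ (n + 2)! := by
    rw [add_comm n 2]
    exact_mod_cast Nat.le_of_dvd (by positivity) (Nat.factorial_mul_factorial_dvd_factorial_add 2 n)
  calc ‖((n + 2)! : ℝ)⁻¹ • x ^ (n + 2)‖ ≤ ((n + 2)! : ℝ)⁻¹ * ‖x‖ ^ (n + 2) := by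
        rw [norm_smul, norm_inv, RCLike.norm_natCast]
        gcongr
        exact norm_pow_le' x (by omega)
    _ ≤ ((2 * n ! : ℕ) : ℝ)⁻¹ * ‖x‖ ^ (n + 2) := by gcongr
    _ = ‖x‖ ^ 2 / 2 * (‖x‖ ^ n / n !) := by push_cast; ring

theorem norm_exp_smul_sub_one_sub_le {t : ℝ} (ht₀ : 0 ≤ t) (ht₁ : t ≤ 1) (a : 𝔸) :
    ‖exp (t • a) - 1 - t • a‖ ≤ ‖a‖ ^ 2 / 2 * Real.exp ‖a‖ * t ^ 2 := by
  have hnorm : ‖t • a‖ = t * ‖a‖ := by rw [norm_smul, Real.norm_of_nonneg ht₀]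
  calc _ ≤ ‖t • a‖ ^ 2 / 2 * Real.exp ‖t • a‖ := norm_exp_sub_one_sub_le _
    _ ≤ (t * ‖a‖) ^ 2 / 2 * Real.exp ‖a‖ := by
        rw [hnorm]
        gcongr
        exact mul_le_of_le_one_left (norm_nonneg a) ht₁
    _ = _ := by ring

theorem norm_integral_exp_smul_sub_one_sub_le {r : ℝ} (hr₀ : 0 ≤ r) (hr₁ : r ≤ 1) (a : 𝔸) :
    ‖∫ s in (0:ℝ)..r, (exp (s • a) - 1 - s • a)‖ ≤ r ^ 3 / 6 * ‖a‖ ^ 2 * Real.exp ‖a‖ := by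
  calc _ ≤ ∫ s in (0:ℝ)..r, ‖a‖ ^ 2 / 2 * Real.exp ‖a‖ * s ^ 2 :=
        intervalIntegral.norm_integral_le_of_norm_le hr₀
          (MeasureTheory.ae_of_all _ fun s hs =>
            norm_exp_smul_sub_one_sub_le hs.1.le (hs.2.trans hr₁) a)
          (Continuous.intervalIntegrable (by fun_prop) _ _)
    _ = _ := by
        rw [intervalIntegral.integral_const_mul, integral_pow]
        ring

theorem continuous_exp_smul (a : 𝔸) : Continuous fun s : ℝ => exp (s • a) :=
  continuous_iff_continuousAt.2 fun s => (hasDerivAt_exp_smul_const a s).continuousAt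

theorem continuous_gDelta (δ : ℝ) (a : 𝔸) : Continuous (gDelta δ a) := by
  have := continuous_exp_smul a
  unfold gDelta
  fun_prop

theorem intervalIntegral.integral_mul_const_of_intervalIntegrable {f : ℝ → 𝔸} {a b : ℝ}
    (hf : IntervalIntegrable f MeasureTheory.volume a b) (c : 𝔸) :
    ∫ x in a..b, f x * c = (∫ x in a..b, f x) * c :=
  ((ContinuousLinearMap.mul ℝ 𝔸).flip c).intervalIntegral_comp_comm hf

theorem integral_gDelta (δ r : ℝ) (a : 𝔸) :
    ∫ s in (0:ℝ)..r, gDelta δ a s =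
      δ⁻¹ • (∫ s in (0:ℝ)..r, (exp (s • a) - 1 - s • a)) + (δ⁻¹ * r ^ 2 / 2 - r / 2) • a := by
  have hexp := continuous_exp_smul a
  have hcoeff : ∫ s in (0:ℝ)..r, (δ⁻¹ * s - 2⁻¹) = δ⁻¹ * r ^ 2 / 2 - r / 2 := by
    rw [intervalIntegral.integral_sub ((continuous_const_mul δ⁻¹).intervalIntegrable _ _)
        intervalIntegrable_const, intervalIntegral.integral_const_mul, integral_id,
      intervalIntegral.integral_const, smul_eq_mul]
    ring
  simp_rw [gDelta_eq]
  rw [intervalIntegral.integral_add (Continuous.intervalIntegrable (by fun_prop) _ _)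
      (Continuous.intervalIntegrable (by fun_prop) _ _),
    intervalIntegral.integral_smul, intervalIntegral.integral_smul_const, hcoeff]

theorem norm_integral_gDelta_le {δ r : ℝ} (hδ : 0 < δ) (hr₀ : 0 ≤ r) (hrδ : r ≤ δ)
    (hδ₁ : δ ≤ 1) (a : 𝔸) :
    ‖∫ s in (0:ℝ)..r, gDelta δ a s‖ ≤
      r ^ 2 / 6 * ‖a‖ ^ 2 * Real.exp ‖a‖ + 1 / 2 * |r - δ| * ‖a‖ := by
  have hratio : r / δ ≤ 1 := div_le_one_of_le₀ hrδ hδ.le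
  have hcoeff : |δ⁻¹ * r ^ 2 / 2 - r / 2| ≤ 1 / 2 * |r - δ| := by
    rw [show δ⁻¹ * r ^ 2 / 2 - r / 2 = r / δ * (1 / 2 * (r - δ)) by field_simp, abs_mul,
      abs_mul, abs_of_nonneg (div_nonneg hr₀ hδ.le), abs_of_pos (by norm_num : (0:ℝ) < 1 / 2)]
    exact mul_le_of_le_one_left (by positivity) hratio
  rw [integral_gDelta]
  calc _ ≤ δ⁻¹ * (r ^ 3 / 6 * ‖a‖ ^ 2 * Real.exp ‖a‖) + 1 / 2 * |r - δ| * ‖a‖ := by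
        refine (norm_add_le _ _).trans (add_le_add ?_ ?_)
        · rw [norm_smul, Real.norm_of_nonneg (inv_nonneg.2 hδ.le)]
          gcongr
          exact norm_integral_exp_smul_sub_one_sub_le hr₀ (hrδ.trans hδ₁) a
        · rw [norm_smul, Real.norm_eq_abs]
          gcongr
    _ = r / δ * (r ^ 2 / 6 * ‖a‖ ^ 2 * Real.exp ‖a‖) + 1 / 2 * |r - δ| * ‖a‖ := by ring
    _ ≤ _ := add_le_add_left (mul_le_of_le_one_left (by positivity) hratio) _

end

theorem g_delta_integral_bound_general {n : ℕ} (A BK : Mat n)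
    (δ : ℝ) (hδ : δ ∈ Set.Ioo (0:ℝ) 1) :
    (∀ r ∈ Set.Ioc (0:ℝ) δ,
      ‖∫ s in (0:ℝ)..r,
          (δ⁻¹ • (NormedSpace.exp (s • A) - 1) - (2:ℝ)⁻¹ • A) * (1 - Ring.inverse A * BK)‖ ≤
        (r ^ 2 / 6 * ‖A‖ ^ 2 * Real.exp ‖A‖ + 1 / 2 * |r - δ| * ‖A‖) *
          ‖1 - Ring.inverse A * BK‖) ∧
    ‖∫ s in (0:ℝ)..δ,
        (δ⁻¹ • (NormedSpace.exp (s • A) - 1) - (2:ℝ)⁻¹ • A) * (1 - Ring.inverse A * BK)‖ ≤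
      δ ^ 2 / 6 * ‖A‖ ^ 2 * Real.exp ‖A‖ * ‖1 - Ring.inverse A * BK‖ := by
  have key : ∀ r ∈ Set.Ioc (0:ℝ) δ,
      ‖∫ s in (0:ℝ)..r, gDelta δ A s * (1 - Ring.inverse A * BK)‖ ≤
        (r ^ 2 / 6 * ‖A‖ ^ 2 * Real.exp ‖A‖ + 1 / 2 * |r - δ| * ‖A‖) *
          ‖1 - Ring.inverse A * BK‖ := by
    rintro r ⟨hr₀, hrδ⟩
    rw [intervalIntegral.integral_mul_const_of_intervalIntegrable
      ((continuous_gDelta δ A).intervalIntegrable _ _)]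
    refine (norm_mul_le _ _).trans ?_
    gcongr
    exact norm_integral_gDelta_le hδ.1 hr₀.le hrδ hδ.2.le A
  have hδδ := key δ ⟨hδ.1, le_rfl⟩
  rw [sub_self, abs_zero, mul_zero, zero_mul, add_zero] at hδδ
  exact ⟨key, hδδ⟩

/-- For every `r ∈ (0, δ]`,
`‖∫_0^r g^δ(s) ds‖ ≤ ((r²/6)‖A‖² e^{‖A‖} + (1/2)|r−δ|‖A‖) ‖I − A⁻¹BK‖`;
in particular `‖∫_0^δ g^δ(s) ds‖ ≤ (δ²/6)‖A‖² e^{‖A‖} ‖I − A⁻¹BK‖`. -/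
theorem g_delta_integral_bound {n : ℕ} (A BK : Mat n) (hA : IsUnit A)
    (δ : ℝ) (hδ : δ ∈ Set.Ioo (0:ℝ) 1) :
    (∀ r ∈ Set.Ioc (0:ℝ) δ,
      ‖∫ s in (0:ℝ)..r,
          (δ⁻¹ • (NormedSpace.exp (s • A) - 1) - (2:ℝ)⁻¹ • A) * (1 - Ring.inverse A * BK)‖ ≤
        (r ^ 2 / 6 * ‖A‖ ^ 2 * Real.exp ‖A‖ + 1 / 2 * |r - δ| * ‖A‖) *
          ‖1 - Ring.inverse A * BK‖) ∧
    ‖∫ s in (0:ℝ)..δ,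
        (δ⁻¹ • (NormedSpace.exp (s • A) - 1) - (2:ℝ)⁻¹ • A) * (1 - Ring.inverse A * BK)‖ ≤
      δ ^ 2 / 6 * ‖A‖ ^ 2 * Real.exp ‖A‖ * ‖1 - Ring.inverse A * BK‖ :=
  g_delta_integral_bound_general A BK δ hδ

end
end

section
/- Let W be an n-dimensional standard Brownian motion, A ∈ ℝ^{n×n}, δ ∈ (0,1), π_δ(t) = δ⌊t/δ⌋, and M_t = ∫_0^t e^{−sA} dW_s. Then almost surely, for all t ≥ 0, |e^{tA}(M_t − M_{π_δ(t)})| ≤ δ|A|(e^{|A|} + e^{2t|A|}) · sup_{0 ≤ s ≤ t}|W_s| + e^{|A|} · |W_t − W_{π_δ(t)}|. -/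
/- `W` is a standard `n`-dimensional Brownian motion, `A` a square matrix
(a continuous linear endomorphism of Euclidean space), `π_δ(t) = δ⌊t/δ⌋`,
and `M_t = ∫_0^t e^{−sA} dW_s` is the Paley–Wiener/Itô integral of the
deterministic integrand `s ↦ e^{−sA}`, defined pathwise (since Mathlib has
no Itô integral) via the integration-by-parts formula
`M_t = e^{−tA}W_t + ∫_0^t e^{−sA} A W_s ds`.  The supremum in the bound is
over `s ∈ [0,t]`. -/

open MeasureTheory ProbabilityTheory

noncomputable section

/-- A standard `n`-dimensional Brownian motion: starts at `0`, has continuous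
paths, increments over disjoint intervals (and across the `n` independent
coordinates) are independent, and each coordinate of the increment over
`[s,t]` is a centered Gaussian of variance `t − s`. -/
structure IsStdBrownianMotion {Ω : Type*} [MeasurableSpace Ω] (P : Measure Ω)
    (n : ℕ) (W : ℝ → Ω → Euc n) : Prop where
  isProb : IsProbabilityMeasure P
  init : ∀ ω, W 0 ω = 0
  meas : ∀ t, Measurable (W t)
  cont : ∀ ω, Continuous fun t => W t ω
  gauss : ∀ s t : ℝ, 0 ≤ s → s ≤ t → ∀ i : Fin n,
    Measure.map (fun ω => W t ω i - W s ω i) P = gaussianReal 0 (Real.toNNReal (t - s))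
  indep : ∀ (m : ℕ) (u : ℕ → ℝ), Monotone u →
    iIndepFun
      (fun p : Fin m × Fin n => fun ω => W (u (p.1 + 1)) ω p.2 - W (u p.1) ω p.2) P

/-- `∫_a^t e^{−sA} dW_s`, defined pathwise via integration by parts. -/
def wienerIntegralExpNeg {n : ℕ} (A : Mat n) (W : ℝ → Euc n) (a t : ℝ) : Euc n :=
  NormedSpace.exp (-(t • A)) (W t) - NormedSpace.exp (-(a • A)) (W a) +
    ∫ s in a..t, NormedSpace.exp (-(s • A)) (A (W s))

/-! Multiplying the increment by `e^{tA}` and writing `τ = π_δ(t)` gives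
`W_t − e^{(t−τ)A} W_τ + ∫_τ^t e^{(t−s)A} A W_s ds`. Splitting the first part as
`e^{(t−τ)A}(W_t − W_τ) + (I − e^{(t−τ)A}) W_t` and using `0 ≤ t − τ < δ < 1` together with
`‖e^B‖ ≤ e^{‖B‖}` and `‖e^B − I‖ ≤ ‖B‖ e^{‖B‖}` bounds the three pieces; the estimate holds
for every continuous path. -/

open scoped Nat

namespace Real

theorem exp_sub_one_le_mul_exp (a : ℝ) : exp a - 1 ≤ a * exp a := by
  nlinarith [one_sub_le_exp_neg a, exp_pos a, exp_neg a, mul_inv_cancel₀ (exp_pos a).ne']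

end Real

namespace NormedSpace

variable {𝔸 : Type*} [NormedRing 𝔸] [NormedAlgebra ℝ 𝔸] [CompleteSpace 𝔸]

theorem hasSum_exp_sub_one (x : 𝔸) :
    HasSum (fun n : ℕ => ((n + 1)! : ℝ)⁻¹ • x ^ (n + 1)) (exp x - 1) := by
  simpa using (hasSum_nat_add_iff' 1).2 (exp_series_hasSum_exp' (𝕂 := ℝ) x)

theorem norm_exp_sub_one_le_exp_norm_sub_one (x : 𝔸) : ‖exp x - 1‖ ≤ Real.exp ‖x‖ - 1 := by
  refine (hasSum_exp_sub_one x).norm_le_of_bounded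
    (by simpa [Real.exp_eq_exp_ℝ] using hasSum_exp_sub_one ‖x‖) fun n => ?_
  rw [norm_smul, norm_inv, RCLike.norm_natCast]
  gcongr
  exact norm_pow_le' x n.succ_pos

theorem norm_exp_sub_one_le (x : 𝔸) : ‖exp x - 1‖ ≤ ‖x‖ * Real.exp ‖x‖ :=
  (norm_exp_sub_one_le_exp_norm_sub_one x).trans (Real.exp_sub_one_le_mul_exp _)

theorem norm_exp_le_exp_norm (h1 : ‖(1 : 𝔸)‖ ≤ 1) (x : 𝔸) : ‖exp x‖ ≤ Real.exp ‖x‖ :=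
  calc ‖exp x‖ = ‖1 + (exp x - 1)‖ := by rw [add_sub_cancel]
    _ ≤ 1 + (Real.exp ‖x‖ - 1) :=
      (norm_add_le _ _).trans (add_le_add h1 (norm_exp_sub_one_le_exp_norm_sub_one x))
    _ = Real.exp ‖x‖ := add_sub_cancel _ _

theorem exp_add_smul (x : 𝔸) (a b : ℝ) : exp ((a + b) • x) = exp (a • x) * exp (b • x) := by
  rw [add_smul]
  -- `exp_add_of_commute` would need a `NormedAlgebra ℚ 𝔸` instance
  exact exp_add_of_commute_of_mem_ball (𝕂 := ℝ) ((Commute.refl x).smul_left a |>.smul_right b)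
    ((expSeries_radius_eq_top ℝ 𝔸).symm ▸ edist_lt_top _ _)
    ((expSeries_radius_eq_top ℝ 𝔸).symm ▸ edist_lt_top _ _)

theorem exp_sub_smul (x : 𝔸) (a b : ℝ) : exp ((a - b) • x) = exp (a • x) * exp (-(b • x)) := by
  rw [sub_eq_add_neg, exp_add_smul, neg_smul]

end NormedSpace

theorem IsCompact.le_ciSup_of_continuousOn {α β : Type*} [ConditionallyCompleteLinearOrder α]
    [TopologicalSpace α] [ClosedIciTopology α] [TopologicalSpace β] {f : β → α} {K : Set β}
    (hK : IsCompact K) (hf : ContinuousOn f K) {x : β} (hx : x ∈ K) :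
    f x ≤ ⨆ y : K, f y :=
  have : Nonempty α := ⟨f x⟩
  le_ciSup (by rw [← Set.image_eq_range]; exact hK.bddAbove_image hf) (⟨x, hx⟩ : K)

theorem ContinuousLinearMap.norm_exp_apply_le {E : Type*} [NormedAddCommGroup E]
    [NormedSpace ℝ E] [CompleteSpace E] (B : E →L[ℝ] E) (v : E) :
    ‖NormedSpace.exp B v‖ ≤ Real.exp ‖B‖ * ‖v‖ :=
  (le_opNorm _ v).trans <| mul_le_mul_of_nonneg_right
    (NormedSpace.norm_exp_le_exp_norm norm_id_le B) (norm_nonneg v)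

section WienerIntegral

open NormedSpace

variable {n : ℕ} (A : Mat n) {w : ℝ → Euc n}

theorem continuous_exp_neg_smul_apply (hw : Continuous w) :
    Continuous fun s : ℝ => exp (-(s • A)) (A (w s)) := by
  have hexp : Continuous fun s : ℝ => exp ((-s) • A) :=
    (differentiable_exp_smul_const ℝ A).continuous.comp continuous_neg
  refine (hexp.congr fun s => ?_).clm_apply (A.continuous.comp hw)
  rw [neg_smul s A]

theorem wienerIntegralExpNeg_sub (hw : Continuous w) (a b c : ℝ) :
    wienerIntegralExpNeg A w a c - wienerIntegralExpNeg A w a b = wienerIntegralExpNeg A w b c := by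
  have hint := (continuous_exp_neg_smul_apply A hw).intervalIntegrable (μ := volume)
  unfold wienerIntegralExpNeg
  rw [← intervalIntegral.integral_interval_sub_left (hint a c) (hint a b)]
  abel

theorem exp_smul_wienerIntegralExpNeg (hw : Continuous w) (a t : ℝ) :
    exp (t • A) (wienerIntegralExpNeg A w a t) =
      w t - exp ((t - a) • A) (w a) + ∫ s in a..t, exp ((t - s) • A) (A (w s)) := by
  have shift (s : ℝ) (v : Euc n) : exp (t • A) (exp (-(s • A)) v) = exp ((t - s) • A) v := by
    rw [exp_sub_smul A t s]
    rfl
  unfold wienerIntegralExpNeg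
  rw [map_add, map_sub, shift, shift, sub_self, zero_smul ℝ A, exp_zero,
    ← ContinuousLinearMap.intervalIntegral_comp_comm _
      ((continuous_exp_neg_smul_apply A hw).intervalIntegrable a t)]
  simp_rw [shift]
  rfl

theorem norm_integral_exp_sub_smul_apply_le {τ t S : ℝ} (hτ : 0 ≤ τ) (hτt : τ ≤ t)
    (hS : ∀ s ∈ Set.Icc τ t, ‖w s‖ ≤ S) :
    ‖∫ s in τ..t, exp ((t - s) • A) (A (w s))‖ ≤ (t - τ) * ‖A‖ * Real.exp (2 * t * ‖A‖) * S := by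
  have hbound : ∀ s ∈ Set.uIoc τ t,
      ‖exp ((t - s) • A) (A (w s))‖ ≤ ‖A‖ * Real.exp (2 * t * ‖A‖) * S := by
    intro s hs
    rw [Set.uIoc_of_le hτt] at hs
    obtain ⟨hτs, hst⟩ := hs
    have hts : ‖(t - s) • A‖ ≤ 2 * t * ‖A‖ := by
      rw [norm_smul (t - s) A, Real.norm_of_nonneg (sub_nonneg.2 hst)]
      gcongr
      linarith
    calc ‖exp ((t - s) • A) (A (w s))‖ ≤ Real.exp ‖(t - s) • A‖ * (‖A‖ * ‖w s‖) :=
          (ContinuousLinearMap.norm_exp_apply_le _ _).trans (by gcongr; exact A.le_opNorm _)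
      _ ≤ Real.exp (2 * t * ‖A‖) * (‖A‖ * S) := by
          gcongr
          exact hS s ⟨hτs.le, hst⟩
      _ = ‖A‖ * Real.exp (2 * t * ‖A‖) * S := by ring
  calc _ ≤ ‖A‖ * Real.exp (2 * t * ‖A‖) * S * |t - τ| :=
        intervalIntegral.norm_integral_le_of_norm_le_const hbound
    _ = (t - τ) * ‖A‖ * Real.exp (2 * t * ‖A‖) * S := by
        rw [abs_of_nonneg (sub_nonneg.2 hτt)]
        ring

theorem norm_exp_smul_wienerIntegralExpNeg_le (hw : Continuous w) {τ t δ S : ℝ}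
    (hτ : 0 ≤ τ) (hτt : τ ≤ t) (hδ : t - τ ≤ δ) (hδ1 : δ ≤ 1)
    (hS : ∀ s ∈ Set.Icc τ t, ‖w s‖ ≤ S) :
    ‖exp (t • A) (wienerIntegralExpNeg A w τ t)‖ ≤
      δ * ‖A‖ * (Real.exp ‖A‖ + Real.exp (2 * t * ‖A‖)) * S + Real.exp ‖A‖ * ‖w t - w τ‖ := by
  set E := exp ((t - τ) • A)
  have hδ0 : 0 ≤ δ := by linarith
  have hS0 : 0 ≤ S := (norm_nonneg _).trans (hS t ⟨hτt, le_rfl⟩)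
  have hnorm : ‖(t - τ) • A‖ ≤ δ * ‖A‖ := by
    rw [norm_smul (t - τ) A, Real.norm_of_nonneg (sub_nonneg.2 hτt)]
    gcongr
  have hexp : Real.exp ‖(t - τ) • A‖ ≤ Real.exp ‖A‖ :=
    Real.exp_le_exp.2 (hnorm.trans (mul_le_of_le_one_left (norm_nonneg _) hδ1))
  have hsplit : w t - E (w τ) = E (w t - w τ) + (1 - E) (w t) := by
    rw [map_sub, sub_apply, one_apply_eq_self]
    abel
  have hjump : ‖E (w t - w τ)‖ ≤ Real.exp ‖A‖ * ‖w t - w τ‖ :=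
    (ContinuousLinearMap.norm_exp_apply_le _ _).trans (by gcongr)
  have hdrift : ‖(1 - E) (w t)‖ ≤ δ * ‖A‖ * Real.exp ‖A‖ * S := by
    calc ‖(1 - E) (w t)‖ ≤ ‖E - 1‖ * ‖w t‖ := by
          rw [norm_sub_rev]; exact ContinuousLinearMap.le_opNorm _ _
      _ ≤ ‖(t - τ) • A‖ * Real.exp ‖(t - τ) • A‖ * S := by
          gcongr
          · exact norm_exp_sub_one_le _
          · exact hS t ⟨hτt, le_rfl⟩
      _ ≤ δ * ‖A‖ * Real.exp ‖A‖ * S := by gcongr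
  have hintegral : ‖∫ s in τ..t, exp ((t - s) • A) (A (w s))‖ ≤
      δ * ‖A‖ * Real.exp (2 * t * ‖A‖) * S :=
    (norm_integral_exp_sub_smul_apply_le A hτ hτt hS).trans (by gcongr)
  rw [exp_smul_wienerIntegralExpNeg A hw, hsplit]
  calc _ ≤ ‖E (w t - w τ)‖ + ‖(1 - E) (w t)‖ + ‖∫ s in τ..t, exp ((t - s) • A) (A (w s))‖ :=
        norm_add₃_le
    _ ≤ Real.exp ‖A‖ * ‖w t - w τ‖ + δ * ‖A‖ * Real.exp ‖A‖ * S +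
        δ * ‖A‖ * Real.exp (2 * t * ‖A‖) * S := by gcongr
    _ = _ := by ring

end WienerIntegral

/-- Almost surely, for all `t ≥ 0`,
`|e^{tA}(M_t − M_{π_δ(t)})| ≤ δ|A|(e^{|A|} + e^{2t|A|}) sup_{0≤s≤t}|W_s|
+ e^{|A|} |W_t − W_{π_δ(t)}|`. -/
theorem exp_mart_increment_bound {Ω : Type*} [MeasurableSpace Ω]
    (P : Measure Ω) (n : ℕ) (W : ℝ → Ω → Euc n) (hW : IsStdBrownianMotion P n W)
    (A : Mat n) (δ : ℝ) (hδ : δ ∈ Set.Ioo (0:ℝ) 1) :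
    ∀ᵐ ω ∂P, ∀ t ≥ (0:ℝ),
      ‖NormedSpace.exp (t • A)
          (wienerIntegralExpNeg A (fun u => W u ω) 0 t -
            wienerIntegralExpNeg A (fun u => W u ω) 0 (δ * ↑⌊t / δ⌋))‖ ≤
        δ * ‖A‖ * (Real.exp ‖A‖ + Real.exp (2 * t * ‖A‖)) *
            (⨆ s : Set.Icc (0:ℝ) t, ‖W s.1 ω‖) +
          Real.exp ‖A‖ * ‖W t ω - W (δ * ↑⌊t / δ⌋) ω‖ := by
  obtain ⟨hδ0, hδ1⟩ := hδ
  refine Filter.Eventually.of_forall fun ω t ht => ?_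
  have hw := hW.cont ω
  set τ := δ * (⌊t / δ⌋ : ℝ)
  have hτ0 : 0 ≤ τ := by positivity
  have hτt : τ ≤ t := by linarith [Int.sub_floor_div_mul_nonneg t hδ0, mul_comm δ (⌊t / δ⌋ : ℝ)]
  have htτ : t - τ ≤ δ := by linarith [Int.sub_floor_div_mul_lt t hδ0, mul_comm δ (⌊t / δ⌋ : ℝ)]
  rw [wienerIntegralExpNeg_sub A hw]
  exact norm_exp_smul_wienerIntegralExpNeg_le A hw hτ0 hτt htτ hδ1.le fun s hs =>
    isCompact_Icc.le_ciSup_of_continuousOn (f := fun u => ‖W u ω‖) (by fun_prop)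
      ⟨hτ0.trans hs.1, hs.2⟩

end
end

section
/- Let A ∈ ℝ^{n×n} be invertible, BK ∈ ℝ^{n×n}, δ, ε ∈ (0,1), π_δ(t) = δ⌊t/δ⌋, and let V be an n-dimensional standard Brownian motion. Define L₃(t) = −∫_0^t (e^{(s−π_δ(s))A} − I) A^{−1}BK V_{π_δ(s)} ds. Then for any T > 0, E[sup_{0 ≤ t ≤ T} |L₃(t)|] ≤ δ |A| e^{δ|A|} |A^{−1}BK| ∫_0^T E[sup_{0 ≤ u ≤ s} |V_u|] ds ≤ δ |A| e^{|A|} |A^{−1}BK| Λ √n T^{3/2}, where Λ is a universal constant from the Burkholder–Davis–Gundy inequality. -/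
/- `A` is an invertible square matrix and `BK` the product of the matrices
`B, K` (all represented as continuous linear maps between Euclidean spaces),
`Ring.inverse A = A⁻¹`, `π_δ(t) = δ⌊t/δ⌋`, `V` is a standard
`n`-dimensional Brownian motion, and
`L₃(t) = −∫_0^t (e^{(s−π_δ(s))A} − I) A⁻¹BK V_{π_δ(s)} ds` (pathwise).
`Λ` is a universal constant from the Burkholder–Davis–Gundy inequality,
i.e. a constant satisfying `E[sup_{0≤u≤s}|V_u|] ≤ Λ √(ns)` for all `s ≥ 0`
(taken here as a hypothesis). `T^{3/2}` is the real power `T ^ ((3:ℝ)/2)`. -/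

open MeasureTheory ProbabilityTheory

noncomputable section

/-! The integrand of `L₃` is bounded by `δ|A|e^{δ|A|}|A⁻¹BK|` times the running maximum
`sup_{u ≤ s} |V_u|`, since `0 ≤ s − π_δ(s) ≤ δ` and `π_δ(s) ≤ s`; integrating in `s` and then in
`ω` (Fubini) gives the first inequality, and `∫_0^T √s ds = 2/3 T^{3/2}` the second.

The only probabilistic input beyond the hypothesis on `Λ` is that `sup_{u ≤ s} |V_u|` is
integrable, which Fubini needs. By dyadic chaining, `sup_{u ≤ s} |V_u|` is bounded by
`∑_j max_k |ΔV_{j,k}|` over the increments on the level-`j` dyadic grid of `[0, s]`, and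
`E[max_k |ΔV_{j,k}|] ≤ (∑_k E|ΔV_{j,k}|⁴)^{1/4} = O(2^{-j/4})` by the Gaussian fourth moment. -/

open Real Set Filter
open scoped NNReal ENNReal Topology

theorem Real.exp_sub_one_le_mul_exp_s14 (t : ℝ) : Real.exp t - 1 ≤ t * Real.exp t := by
  have h := Real.add_one_le_exp (-t)
  rw [Real.exp_neg] at h
  have := Real.exp_pos t
  field_simp at h
  nlinarith

section exp

variable {𝔸 : Type*} [NormedRing 𝔸] [NormedAlgebra ℝ 𝔸] [CompleteSpace 𝔸]

theorem NormedSpace.norm_exp_sub_one_le_s14 (x : 𝔸) : ‖exp x - 1‖ ≤ Real.exp ‖x‖ - 1 := by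
  have hx := NormedSpace.exp_series_hasSum_exp' (𝕂 := ℝ) x
  have ht := NormedSpace.exp_series_hasSum_exp' (𝕂 := ℝ) ‖x‖
  rw [← hasSum_nat_add_iff' 1] at hx ht
  rw [← Real.exp_eq_exp_ℝ] at ht
  simp only [Finset.range_one, Finset.sum_singleton, Nat.factorial_zero, Nat.cast_one, inv_one,
    pow_zero, one_smul] at hx ht
  refine hx.norm_le_of_bounded ht fun k => ?_
  rw [norm_smul, Real.norm_of_nonneg (by positivity), smul_eq_mul]
  gcongr
  exact norm_pow_le' x k.succ_pos

theorem norm_exp_smul_sub_one_mul_le (A R : 𝔸) {τ δ : ℝ} (hτ : τ ∈ Icc 0 δ) :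
    ‖(NormedSpace.exp (τ • A) - 1) * R‖ ≤ δ * ‖A‖ * Real.exp (δ * ‖A‖) * ‖R‖ := by
  obtain ⟨hτ₀, hτδ⟩ := hτ
  have hδ : 0 ≤ δ := hτ₀.trans hτδ
  calc ‖(NormedSpace.exp (τ • A) - 1) * R‖ ≤ (Real.exp (τ * ‖A‖) - 1) * ‖R‖ := by
        refine (norm_mul_le _ _).trans (mul_le_mul_of_nonneg_right ?_ (norm_nonneg R))
        simpa [norm_smul, abs_of_nonneg hτ₀] using NormedSpace.norm_exp_sub_one_le_s14 (τ • A)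
    _ ≤ τ * ‖A‖ * Real.exp (τ * ‖A‖) * ‖R‖ := by gcongr; exact Real.exp_sub_one_le_mul_exp_s14 _
    _ ≤ δ * ‖A‖ * Real.exp (δ * ‖A‖) * ‖R‖ := by gcongr

end exp

theorem mul_floor_div_mem_Icc {δ s : ℝ} (hδ : 0 < δ) (hs : 0 ≤ s) : δ * ⌊s / δ⌋ ∈ Icc 0 s := by
  constructor
  · have : (0 : ℝ) ≤ ⌊s / δ⌋ := by exact_mod_cast Int.floor_nonneg.mpr (by positivity)
    positivity
  · calc δ * ⌊s / δ⌋ ≤ δ * (s / δ) := by gcongr; exact Int.floor_le _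
      _ = s := by field_simp

theorem sub_mul_floor_div_mem_Icc {δ : ℝ} (hδ : 0 < δ) (s : ℝ) :
    s - δ * ⌊s / δ⌋ ∈ Icc 0 δ := by
  have h₁ := Int.sub_floor_div_mul_nonneg s hδ
  have h₂ := Int.sub_floor_div_mul_lt s hδ
  constructor <;> linarith

theorem iSup_norm_intervalIntegral_le {E : Type*} [NormedAddCommGroup E] [NormedSpace ℝ E]
    {Φ : ℝ → E} {G : ℝ → ℝ} {C T : ℝ} (hT : 0 ≤ T) (hC : 0 ≤ C) (hG : MonotoneOn G (Ici 0))
    (hG₀ : ∀ s ≥ 0, 0 ≤ G s) (hΦ : ∀ s ≥ 0, ‖Φ s‖ ≤ C * G s) :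
    ⨆ t : Icc (0 : ℝ) T, ‖∫ s in (0 : ℝ)..t, Φ s‖ ≤ C * ∫ s in (0 : ℝ)..T, G s := by
  have hCG : IntervalIntegrable (fun s => C * G s) volume 0 T :=
    (hG.mono (by simp [uIcc_of_le hT, Icc_subset_Ici_self])).intervalIntegrable.const_mul C
  have hCG₀ : 0 ≤ ∫ s in (0 : ℝ)..T, C * G s :=
    intervalIntegral.integral_nonneg hT fun s hs => mul_nonneg hC (hG₀ s hs.1)
  rw [← intervalIntegral.integral_const_mul]
  refine Real.iSup_le (fun ⟨t, ht⟩ => ?_) hCG₀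
  calc ‖∫ s in (0 : ℝ)..t, Φ s‖ ≤ ∫ s in (0 : ℝ)..t, C * G s :=
        intervalIntegral.norm_integral_le_of_norm_le ht.1
          (ae_of_all _ fun s hs => hΦ s hs.1.le) (hCG.mono_set (by
            simp [uIcc_of_le ht.1, uIcc_of_le hT, Icc_subset_Icc_right ht.2]))
    _ ≤ ∫ s in (0 : ℝ)..T, C * G s :=
        intervalIntegral.integral_mono_interval le_rfl ht.1 ht.2
          ((ae_restrict_iff' measurableSet_Ioc).mpr (ae_of_all _ fun s hs =>
            mul_nonneg hC (hG₀ s hs.1.le))) hCG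

theorem integral_sqrt (T : ℝ) : ∫ s in (0 : ℝ)..T, √s = 2 / 3 * T ^ ((3 : ℝ) / 2) := by
  simp_rw [Real.sqrt_eq_rpow]
  rw [integral_rpow (Or.inl (by norm_num)), Real.zero_rpow (by norm_num)]
  norm_num
  ring

def runningSup (f : ℝ → ℝ) (s : ℝ) : ℝ := ⨆ u : Icc (0 : ℝ) s, f u

section runningSup

variable {f : ℝ → ℝ}

theorem runningSup_nonneg (hf : ∀ u, 0 ≤ f u) (s : ℝ) : 0 ≤ runningSup f s :=
  Real.iSup_nonneg fun u => hf u

theorem le_runningSup (hf : Continuous f) {s u : ℝ} (hu : u ∈ Icc 0 s) : f u ≤ runningSup f s :=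
  le_ciSup (f := fun u : Icc (0 : ℝ) s => f u)
    (by rw [← image_eq_range]; exact (isCompact_Icc.image hf).bddAbove) ⟨u, hu⟩

theorem runningSup_le {s a : ℝ} (ha : 0 ≤ a) (h : ∀ u ∈ Icc 0 s, f u ≤ a) :
    runningSup f s ≤ a :=
  Real.iSup_le (fun u => h u u.2) ha

theorem ofReal_runningSup_le {s : ℝ} {a : ℝ≥0∞} (h : ∀ u ∈ Icc 0 s, ENNReal.ofReal (f u) ≤ a) :
    ENNReal.ofReal (runningSup f s) ≤ a := by
  rcases eq_or_ne a ∞ with rfl | ha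
  · exact le_top
  simp_rw [ENNReal.ofReal_le_iff_le_toReal ha] at h ⊢
  exact runningSup_le ENNReal.toReal_nonneg h

theorem runningSup_mono (hf : Continuous f) {s₁ s₂ : ℝ} (h₀ : 0 ≤ s₁) (h : s₁ ≤ s₂) :
    runningSup f s₁ ≤ runningSup f s₂ :=
  have : Nonempty (Icc (0 : ℝ) s₁) := ⟨⟨0, le_rfl, h₀⟩⟩
  ciSup_le fun u => le_runningSup hf ⟨u.2.1, u.2.2.trans h⟩

theorem runningSup_eq_iSup_rat (hf : Continuous f) {s : ℝ} (hs : 0 ≤ s) :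
    runningSup f s = ⨆ q : ℚ, f (max 0 (min s q)) := by
  have hdense : DenseRange fun q : ℚ => projIcc 0 s hs q :=
    (projIcc_surjective hs).denseRange.comp Rat.denseRange_cast continuous_projIcc
  have := hdense.ciSup' (f := fun u : Icc (0 : ℝ) s => f u) (hf.comp continuous_subtype_val)
  rw [iSup_range' (fun u : Icc (0 : ℝ) s => f u)] at this
  exact this.symm

end runningSup

theorem exists_mem_Icc_zero_one_mul_eq {s u : ℝ} (hu : u ∈ Icc 0 s) :
    ∃ t ∈ Icc (0 : ℝ) 1, s * t = u := by
  rcases (hu.1.trans hu.2).eq_or_lt with rfl | hs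
  · exact ⟨0, by simp, by simp [le_antisymm hu.2 hu.1]⟩
  · exact ⟨u / s, ⟨div_nonneg hu.1 hs.le, div_le_one_of_le₀ hu.2 hs.le⟩, mul_div_cancel₀ u hs.ne'⟩

section dyadic

variable {E : Type*} [PseudoEMetricSpace E] {f : ℝ → E} {g : ℕ → ℝ≥0∞}

theorem edist_dyadic_le_sum
    (hg : ∀ j k : ℕ, k < 2 ^ j → edist (f ((k + 1) / 2 ^ j)) (f (k / 2 ^ j)) ≤ g j) (j : ℕ) :
    ∀ m : ℕ, m ≤ 2 ^ j → edist (f (m / 2 ^ j)) (f 0) ≤ ∑ i ∈ Finset.range (j + 1), g i := by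
  induction j with
  | zero =>
    intro m hm
    interval_cases m
    · simp
    · simpa using hg 0 0 one_pos
  | succ j ih =>
    intro m hm
    have hstep : edist (f (m / 2 ^ (j + 1))) (f (↑(m / 2) / 2 ^ j)) ≤ g (j + 1) := by
      rcases Nat.even_or_odd' m with ⟨k, rfl | rfl⟩
      · have hk : (2 * k / 2 : ℕ) = k := by omega
        simp only [hk]
        rw [← mul_div_mul_left (k : ℝ) _ two_ne_zero, ← pow_succ']
        simp
      · have hk : ((2 * k + 1) / 2 : ℕ) = k := by omega
        have h := hg (j + 1) (2 * k) (by omega)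
        rw [hk, ← mul_div_mul_left (k : ℝ) _ two_ne_zero, ← pow_succ']
        push_cast at h ⊢
        exact h
    calc edist (f (m / 2 ^ (j + 1))) (f 0)
        ≤ edist (f (m / 2 ^ (j + 1))) (f (↑(m / 2) / 2 ^ j)) + edist (f (↑(m / 2) / 2 ^ j)) (f 0) :=
          edist_triangle _ _ _
      _ ≤ g (j + 1) + ∑ i ∈ Finset.range (j + 1), g i := add_le_add hstep (ih _ (by omega))
      _ = ∑ i ∈ Finset.range (j + 2), g i := by rw [Finset.sum_range_succ _ (j + 1), add_comm]

theorem edist_le_tsum_of_dyadic (hf : Continuous f)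
    (hg : ∀ j k : ℕ, k < 2 ^ j → edist (f ((k + 1) / 2 ^ j)) (f (k / 2 ^ j)) ≤ g j)
    {t : ℝ} (ht : t ∈ Icc 0 1) : edist (f t) (f 0) ≤ ∑' j, g j := by
  have hlim : Tendsto (fun j : ℕ => (⌊t * 2 ^ j⌋₊ : ℝ) / 2 ^ j) atTop (𝓝 t) :=
    (tendsto_nat_floor_mul_div_atTop ht.1).comp
      (tendsto_pow_atTop_atTop_of_one_lt (one_lt_two (α := ℝ)))
  refine le_of_tendsto' (((hf.tendsto t).comp hlim).edist tendsto_const_nhds) fun j => ?_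
  refine (edist_dyadic_le_sum hg j _ ?_).trans (ENNReal.sum_le_tsum _)
  refine Nat.floor_le_of_le ?_
  push_cast
  nlinarith [ht.2, pow_pos (two_pos (α := ℝ)) j]

end dyadic

theorem lintegral_rpow_inv_le {α : Type*} [MeasurableSpace α] {μ : Measure α}
    [IsProbabilityMeasure μ] {f : α → ℝ≥0∞} (hf : AEMeasurable f μ) {p : ℝ} (hp : 1 ≤ p) :
    ∫⁻ a, f a ^ p⁻¹ ∂μ ≤ (∫⁻ a, f a ∂μ) ^ p⁻¹ := by
  have hp0 : 0 < p := one_pos.trans_le hp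
  have h := eLpNorm_le_eLpNorm_of_exponent_le (μ := μ) (ENNReal.one_le_ofReal.mpr hp)
    (hf.pow_const p⁻¹).aestronglyMeasurable
  rw [eLpNorm_one_eq_lintegral_enorm, eLpNorm_eq_lintegral_rpow_enorm_toReal
    (by simpa using hp0) ENNReal.ofReal_ne_top, ENNReal.toReal_ofReal hp0.le] at h
  simpa [← ENNReal.rpow_mul, inv_mul_cancel₀ hp0.ne'] using h

theorem EuclideanSpace.enorm_pow_four_le {ι : Type*} [Fintype ι] (x : EuclideanSpace ℝ ι) :
    ‖x‖ₑ ^ 4 ≤ Fintype.card ι * ∑ i, ‖x i‖ₑ ^ 4 := by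
  have h : ‖x‖ ^ 4 ≤ Fintype.card ι * ∑ i, ‖x i‖ ^ 4 := by
    calc ‖x‖ ^ 4 = (∑ i, ‖x i‖ ^ 2) ^ 2 := by rw [← EuclideanSpace.norm_sq_eq]; ring
      _ ≤ Fintype.card ι * ∑ i, (‖x i‖ ^ 2) ^ 2 := sq_sum_le_card_mul_sum_sq
      _ = Fintype.card ι * ∑ i, ‖x i‖ ^ 4 := by simp_rw [← pow_mul]
  simp_rw [← ofReal_norm, ← ENNReal.ofReal_pow (norm_nonneg _)]
  rw [← ENNReal.ofReal_sum_of_nonneg (fun i _ => by positivity), ← ENNReal.ofReal_natCast,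
    ← ENNReal.ofReal_mul (by positivity)]
  exact ENNReal.ofReal_le_ofReal h

theorem lintegral_enorm_pow_gaussianReal (v : ℝ≥0) (p : ℕ) :
    ∫⁻ x, ‖x‖ₑ ^ (2 * p) ∂gaussianReal 0 v
      = v ^ p * ∫⁻ x, ‖x‖ₑ ^ (2 * p) ∂gaussianReal 0 1 := by
  have hmap : (gaussianReal 0 1).map ((NNReal.sqrt v : ℝ) * ·) = gaussianReal 0 v := by
    rw [gaussianReal_map_const_mul, mul_zero, mul_one]
    congr 1
    ext
    simp only [NNReal.coe_mk]
    exact_mod_cast NNReal.sq_sqrt v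
  rw [← hmap, lintegral_map (by fun_prop) (by fun_prop)]
  simp_rw [enorm_mul, mul_pow]
  rw [lintegral_const_mul _ (by fun_prop), pow_mul]
  congr
  rw [Real.enorm_of_nonneg (NNReal.coe_nonneg _), ← ENNReal.ofReal_pow (NNReal.coe_nonneg _)]
  simp

theorem lintegral_enorm_pow_gaussianReal_lt_top (v : ℝ≥0) (p : ℕ) :
    ∫⁻ x, ‖x‖ₑ ^ p ∂gaussianReal 0 v < ∞ := by
  rcases eq_or_ne p 0 with rfl | hp
  · simp
  have := lintegral_rpow_enorm_lt_top_of_eLpNorm_lt_top (μ := gaussianReal 0 v) (f := id)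
    (p := p) (by exact_mod_cast hp) ENNReal.coe_ne_top (memLp_id_gaussianReal p).eLpNorm_lt_top
  simpa using this

namespace IsStdBrownianMotion

variable {Ω : Type*} [MeasurableSpace Ω] {P : Measure Ω} {n : ℕ} {V : ℝ → Ω → Euc n}

theorem measurable_apply (hV : IsStdBrownianMotion P n V) (t : ℝ) (i : Fin n) :
    Measurable fun ω => V t ω i :=
  (measurable_pi_apply i).comp ((PiLp.continuous_ofLp 2 _).measurable.comp (hV.meas t))

theorem lintegral_enorm_sub_pow_four_le (hV : IsStdBrownianMotion P n V) {s t : ℝ} (hs : 0 ≤ s)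
    (hst : s ≤ t) :
    ∫⁻ ω, ‖V t ω - V s ω‖ₑ ^ 4 ∂P
      ≤ n ^ 2 * ENNReal.ofReal ((t - s) ^ 2) * ∫⁻ x, ‖x‖ₑ ^ 4 ∂gaussianReal 0 1 := by
  have hm (i : Fin n) : Measurable fun ω => V t ω i - V s ω i :=
    (hV.measurable_apply t i).sub (hV.measurable_apply s i)
  have hcoord (i : Fin n) : ∫⁻ ω, ‖V t ω i - V s ω i‖ₑ ^ 4 ∂P
      = ENNReal.ofReal ((t - s) ^ 2) * ∫⁻ x, ‖x‖ₑ ^ 4 ∂gaussianReal 0 1 := by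
    rw [← lintegral_map (f := fun x : ℝ => ‖x‖ₑ ^ 4) (g := fun ω => V t ω i - V s ω i)
      (by fun_prop) (hm i), hV.gauss s t hs hst i]
    have := lintegral_enorm_pow_gaussianReal (t - s).toNNReal 2
    norm_num at this
    rw [this, ENNReal.ofReal_pow (sub_nonneg.mpr hst)]
    rfl
  calc ∫⁻ ω, ‖V t ω - V s ω‖ₑ ^ 4 ∂P
      ≤ ∫⁻ ω, n * ∑ i, ‖V t ω i - V s ω i‖ₑ ^ 4 ∂P := by
        refine lintegral_mono fun ω => ?_
        simpa using EuclideanSpace.enorm_pow_four_le (V t ω - V s ω)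
    _ = n ^ 2 * ENNReal.ofReal ((t - s) ^ 2) * ∫⁻ x, ‖x‖ₑ ^ 4 ∂gaussianReal 0 1 := by
        rw [lintegral_const_mul _ (Finset.measurable_sum _ fun i _ => (hm i).enorm.pow_const 4),
          lintegral_finsetSum _ (fun i _ => (hm i).enorm.pow_const 4)]
        simp [hcoord]
        ring

theorem lintegral_sum_dyadic_increments_le (hV : IsStdBrownianMotion P n V) {s : ℝ} (hs : 0 ≤ s)
    (j : ℕ) :
    ∫⁻ ω, ∑ k ∈ Finset.range (2 ^ j), ‖V (s * ((k + 1) / 2 ^ j)) ω - V (s * (k / 2 ^ j)) ω‖ₑ ^ 4 ∂P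
      ≤ n ^ 2 * ENNReal.ofReal (s ^ 2) * (∫⁻ x, ‖x‖ₑ ^ 4 ∂gaussianReal 0 1) * 2⁻¹ ^ j := by
  have hm (a b : ℝ) : Measurable fun ω => ‖V a ω - V b ω‖ₑ ^ 4 :=
    ((hV.meas a).sub (hV.meas b)).enorm.pow_const 4
  rw [lintegral_finsetSum _ fun k _ => hm _ _]
  calc ∑ k ∈ Finset.range (2 ^ j), ∫⁻ ω, ‖V (s * ((k + 1) / 2 ^ j)) ω - V (s * (k / 2 ^ j)) ω‖ₑ ^ 4 ∂P
      ≤ ∑ k ∈ Finset.range (2 ^ j),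
          n ^ 2 * ENNReal.ofReal ((s / 2 ^ j) ^ 2) * ∫⁻ x, ‖x‖ₑ ^ 4 ∂gaussianReal 0 1 := by
        refine Finset.sum_le_sum fun k _ => ?_
        refine (hV.lintegral_enorm_sub_pow_four_le (by positivity) (by gcongr; linarith)).trans_eq ?_
        congr 4
        ring
    _ = n ^ 2 * ENNReal.ofReal (s ^ 2) * (∫⁻ x, ‖x‖ₑ ^ 4 ∂gaussianReal 0 1) * 2⁻¹ ^ j := by
        rw [Finset.sum_const, Finset.card_range, nsmul_eq_mul]
        have : ((2 ^ j : ℕ) : ℝ≥0∞) * ENNReal.ofReal ((s / 2 ^ j) ^ 2)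
            = ENNReal.ofReal (s ^ 2) * 2⁻¹ ^ j := by
          rw [← ENNReal.ofReal_natCast, ← ENNReal.ofReal_mul (by positivity),
            show (2⁻¹ : ℝ≥0∞) = ENNReal.ofReal 2⁻¹ by simp, ← ENNReal.ofReal_pow (by norm_num),
            ← ENNReal.ofReal_mul (by positivity)]
          congr 1
          rw [inv_pow]
          push_cast
          field_simp
        calc _ = ((2 ^ j : ℕ) : ℝ≥0∞) * ENNReal.ofReal ((s / 2 ^ j) ^ 2) * (n ^ 2 *
              ∫⁻ x, ‖x‖ₑ ^ 4 ∂gaussianReal 0 1) := by ring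
          _ = _ := by rw [this]; ring

theorem ofReal_runningSup_le_tsum (hV : IsStdBrownianMotion P n V) (s : ℝ) (ω : Ω) :
    ENNReal.ofReal (runningSup (fun u => ‖V u ω‖) s) ≤ ∑' j : ℕ,
      (∑ k ∈ Finset.range (2 ^ j), ‖V (s * ((k + 1) / 2 ^ j)) ω - V (s * (k / 2 ^ j)) ω‖ₑ ^ 4)
        ^ (4⁻¹ : ℝ) := by
  refine ofReal_runningSup_le fun u hu => ?_
  obtain ⟨t, ht, rfl⟩ := exists_mem_Icc_zero_one_mul_eq hu
  rw [ofReal_norm, ← edist_zero_right, ← hV.init ω, ← mul_zero s]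
  refine edist_le_tsum_of_dyadic (f := fun r => V (s * r) ω)
    ((hV.cont ω).comp (continuous_const.mul continuous_id)) (fun j k hk => ?_) ht
  rw [edist_eq_enorm_sub]
  calc _ = (‖V (s * ((k + 1) / 2 ^ j)) ω - V (s * (k / 2 ^ j)) ω‖ₑ ^ 4) ^ (4⁻¹ : ℝ) := by
        simpa using (ENNReal.pow_rpow_inv_natCast four_ne_zero _).symm
    _ ≤ _ := by
        gcongr
        exact Finset.single_le_sum (f := fun k : ℕ =>
          ‖V (s * ((k + 1) / 2 ^ j)) ω - V (s * (k / 2 ^ j)) ω‖ₑ ^ 4) (by simp)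
          (Finset.mem_range.mpr hk)

theorem lintegral_ofReal_runningSup_lt_top (hV : IsStdBrownianMotion P n V) {s : ℝ} (hs : 0 ≤ s) :
    ∫⁻ ω, ENNReal.ofReal (runningSup (fun u => ‖V u ω‖) s) ∂P < ∞ := by
  have := hV.isProb
  set K := n ^ 2 * ENNReal.ofReal (s ^ 2) * ∫⁻ x, ‖x‖ₑ ^ 4 ∂gaussianReal 0 1
  have hK : K ≠ ∞ := by
    have := lintegral_enorm_pow_gaussianReal_lt_top 1 4
    finiteness
  have hm (j : ℕ) : Measurable fun ω => ∑ k ∈ Finset.range (2 ^ j),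
      ‖V (s * ((k + 1) / 2 ^ j)) ω - V (s * (k / 2 ^ j)) ω‖ₑ ^ 4 :=
    Finset.measurable_sum _ fun k _ => ((hV.meas _).sub (hV.meas _)).enorm.pow_const 4
  calc ∫⁻ ω, ENNReal.ofReal (runningSup (fun u => ‖V u ω‖) s) ∂P
      ≤ ∫⁻ ω, ∑' j : ℕ, (∑ k ∈ Finset.range (2 ^ j),
          ‖V (s * ((k + 1) / 2 ^ j)) ω - V (s * (k / 2 ^ j)) ω‖ₑ ^ 4) ^ (4⁻¹ : ℝ) ∂P :=
        lintegral_mono (hV.ofReal_runningSup_le_tsum s)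
    _ = ∑' j : ℕ, ∫⁻ ω, (∑ k ∈ Finset.range (2 ^ j),
          ‖V (s * ((k + 1) / 2 ^ j)) ω - V (s * (k / 2 ^ j)) ω‖ₑ ^ 4) ^ (4⁻¹ : ℝ) ∂P :=
        lintegral_tsum fun j => ((hm j).pow_const _).aemeasurable
    _ ≤ ∑' j : ℕ, (K * 2⁻¹ ^ j) ^ (4⁻¹ : ℝ) := by
        refine ENNReal.tsum_le_tsum fun j => (lintegral_rpow_inv_le (hm j).aemeasurable
          (by norm_num)).trans ?_
        gcongr
        exact hV.lintegral_sum_dyadic_increments_le hs j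
    _ = K ^ (4⁻¹ : ℝ) * ∑' j : ℕ, ((2⁻¹ : ℝ≥0∞) ^ (4⁻¹ : ℝ)) ^ j := by
        rw [← ENNReal.tsum_mul_left]
        congr 1 with j
        rw [ENNReal.mul_rpow_of_nonneg _ _ (by norm_num), ← ENNReal.rpow_natCast,
          ← ENNReal.rpow_natCast, ← ENNReal.rpow_mul, ← ENNReal.rpow_mul, mul_comm (j : ℝ)]
    _ < ∞ := ENNReal.mul_lt_top (ENNReal.rpow_lt_top_of_nonneg (by norm_num) hK)
        (tsum_geometric_lt_top.mpr (ENNReal.rpow_lt_one (by norm_num) (by norm_num)))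

theorem measurable_runningSup (hV : IsStdBrownianMotion P n V) {s : ℝ} (hs : 0 ≤ s) :
    Measurable fun ω => runningSup (fun u => ‖V u ω‖) s := by
  rw [funext fun ω => runningSup_eq_iSup_rat (hV.cont ω).norm hs]
  exact .iSup fun q => (hV.meas _).norm

theorem integrable_runningSup (hV : IsStdBrownianMotion P n V) {s : ℝ} (hs : 0 ≤ s) :
    Integrable (fun ω => runningSup (fun u => ‖V u ω‖) s) P :=
  ⟨(hV.measurable_runningSup hs).aestronglyMeasurable,
    (hasFiniteIntegral_iff_ofReal (ae_of_all _ fun _ => runningSup_nonneg (fun _ => norm_nonneg _) s)).mpr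
      (hV.lintegral_ofReal_runningSup_lt_top hs)⟩

theorem monotoneOn_integral_runningSup (hV : IsStdBrownianMotion P n V) :
    MonotoneOn (fun s => ∫ ω, runningSup (fun u => ‖V u ω‖) s ∂P) (Ici 0) :=
  fun _ hs₁ _ hs₂ h => integral_mono (hV.integrable_runningSup hs₁) (hV.integrable_runningSup hs₂)
    fun ω => runningSup_mono (hV.cont ω).norm hs₁ h

theorem integrable_uncurry_runningSup (hV : IsStdBrownianMotion P n V) {T : ℝ} (hT : 0 ≤ T) :
    Integrable (Function.uncurry fun s ω => runningSup (fun u => ‖V u ω‖) s)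
      ((volume.restrict (Ioc 0 T)).prod P) := by
  have := hV.isProb
  have hpos : ∀ᵐ p ∂(volume.restrict (Ioc 0 T)).prod P, p.1 ∈ Ioc 0 T :=
    Measure.quasiMeasurePreserving_fst.ae (ae_restrict_mem measurableSet_Ioc)
  have hmeas : Measurable fun p : ℝ × Ω => ⨆ q : ℚ, ‖V (max 0 (min p.1 q)) p.2‖ :=
    .iSup fun q => measurable_uncurry_of_continuous_of_measurable
      (u := fun s ω => ‖V (max 0 (min s q)) ω‖) (fun ω => by have := hV.cont ω; fun_prop)
      fun s => (hV.meas _).norm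
  refine (hV.integrable_runningSup hT).comp_snd _ |>.mono' ?_ ?_
  · refine hmeas.aestronglyMeasurable.congr ?_
    filter_upwards [hpos] with p hp
    exact (runningSup_eq_iSup_rat (hV.cont p.2).norm hp.1.le).symm
  · filter_upwards [hpos] with ⟨s, ω⟩ hs
    rw [Function.uncurry_apply_pair,
      Real.norm_of_nonneg (runningSup_nonneg (fun _ => norm_nonneg _) _)]
    exact runningSup_mono (hV.cont ω).norm hs.1.le hs.2

theorem integrable_intervalIntegral_runningSup (hV : IsStdBrownianMotion P n V) {T : ℝ}
    (hT : 0 ≤ T) :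
    Integrable (fun ω => ∫ s in (0 : ℝ)..T, runningSup (fun u => ‖V u ω‖) s) P := by
  have := hV.isProb
  simp_rw [intervalIntegral.integral_of_le hT]
  exact (hV.integrable_uncurry_runningSup hT).integral_prod_right

theorem integral_intervalIntegral_runningSup (hV : IsStdBrownianMotion P n V) {T : ℝ}
    (hT : 0 ≤ T) :
    ∫ ω, (∫ s in (0 : ℝ)..T, runningSup (fun u => ‖V u ω‖) s) ∂P
      = ∫ s in (0 : ℝ)..T, ∫ ω, runningSup (fun u => ‖V u ω‖) s ∂P := by
  have := hV.isProb
  simp_rw [intervalIntegral.integral_of_le hT]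
  exact (integral_integral_swap (hV.integrable_uncurry_runningSup hT)).symm

theorem integral_iSup_norm_intervalIntegral_le {E : Type*} [NormedAddCommGroup E]
    [NormedSpace ℝ E] (hV : IsStdBrownianMotion P n V) {Φ : ℝ → Ω → E} {C T : ℝ} (hT : 0 ≤ T)
    (hC : 0 ≤ C) (hΦ : ∀ ω, ∀ s ≥ 0, ‖Φ s ω‖ ≤ C * runningSup (fun u => ‖V u ω‖) s) :
    ∫ ω, (⨆ t : Icc (0 : ℝ) T, ‖∫ s in (0 : ℝ)..t, Φ s ω‖) ∂P
      ≤ C * ∫ s in (0 : ℝ)..T, ∫ ω, runningSup (fun u => ‖V u ω‖) s ∂P := by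
  calc _ ≤ ∫ ω, C * (∫ s in (0 : ℝ)..T, runningSup (fun u => ‖V u ω‖) s) ∂P :=
        integral_mono_of_nonneg (ae_of_all _ fun ω => Real.iSup_nonneg fun _ => norm_nonneg _)
          ((hV.integrable_intervalIntegral_runningSup hT).const_mul C) (ae_of_all _ fun ω =>
            iSup_norm_intervalIntegral_le hT hC
              (fun _ h₁ _ _ h => runningSup_mono (hV.cont ω).norm h₁ h)
              (fun s _ => runningSup_nonneg (fun _ => norm_nonneg _) s) (hΦ ω))
    _ = _ := by rw [integral_const_mul, hV.integral_intervalIntegral_runningSup hT]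

theorem intervalIntegral_integral_runningSup_le (hV : IsStdBrownianMotion P n V) {T Λ : ℝ}
    (hT : 0 ≤ T) (hΛ : ∀ s ≥ (0 : ℝ), ∫ ω, runningSup (fun u => ‖V u ω‖) s ∂P ≤ Λ * √(n * s)) :
    ∫ s in (0 : ℝ)..T, ∫ ω, runningSup (fun u => ‖V u ω‖) s ∂P
      ≤ Λ * √n * (2 / 3 * T ^ ((3 : ℝ) / 2)) :=
  calc _ ≤ ∫ s in (0 : ℝ)..T, Λ * √n * √s :=
        intervalIntegral.integral_mono_on hT
          (hV.monotoneOn_integral_runningSup.mono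
            (by simp [uIcc_of_le hT, Icc_subset_Ici_self])).intervalIntegrable
          ((by fun_prop : Continuous fun s => Λ * √n * √s).intervalIntegrable _ _)
          fun s hs => (hΛ s hs.1).trans_eq (by rw [Real.sqrt_mul (Nat.cast_nonneg n)]; ring)
    _ = _ := by rw [intervalIntegral.integral_const_mul, integral_sqrt]

end IsStdBrownianMotion

theorem L3_bound_general {Ω : Type*} [MeasurableSpace Ω]
    (P : Measure Ω) (n m : ℕ) (V : ℝ → Ω → Euc n) (hV : IsStdBrownianMotion P n V)
    (A : Mat n) (B : Euc m →L[ℝ] Euc n) (K : Euc n →L[ℝ] Euc m)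
    (δ : ℝ) (hδ : δ ∈ Set.Ioo (0:ℝ) 1)
    (T : ℝ) (hT : 0 < T) (Λ : ℝ)
    (hΛ : ∀ s ≥ (0:ℝ), (∫ ω, (⨆ u : Set.Icc (0:ℝ) s, ‖V u.1 ω‖) ∂P) ≤
      Λ * Real.sqrt (n * s)) :
    (∫ ω, (⨆ t : Set.Icc (0:ℝ) T,
        ‖-∫ s in (0:ℝ)..t.1,
            ((NormedSpace.exp ((s - δ * ↑⌊s / δ⌋) • A) - 1) *
              (Ring.inverse A * (B ∘L K))) (V (δ * ↑⌊s / δ⌋) ω)‖) ∂P) ≤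
      δ * ‖A‖ * Real.exp (δ * ‖A‖) * ‖Ring.inverse A * (B ∘L K)‖ *
        (∫ s in (0:ℝ)..T, ∫ ω, (⨆ u : Set.Icc (0:ℝ) s, ‖V u.1 ω‖) ∂P) ∧
    δ * ‖A‖ * Real.exp (δ * ‖A‖) * ‖Ring.inverse A * (B ∘L K)‖ *
        (∫ s in (0:ℝ)..T, ∫ ω, (⨆ u : Set.Icc (0:ℝ) s, ‖V u.1 ω‖) ∂P) ≤
      δ * ‖A‖ * Real.exp ‖A‖ * ‖Ring.inverse A * (B ∘L K)‖ * Λ * Real.sqrt n *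
        T ^ ((3:ℝ) / 2) := by
  set R := Ring.inverse A * (B ∘L K)
  have hδ₀ := hδ.1
  have hC : 0 ≤ δ * ‖A‖ * Real.exp (δ * ‖A‖) * ‖R‖ := by positivity
  have hC' : δ * ‖A‖ * Real.exp (δ * ‖A‖) * ‖R‖ ≤ δ * ‖A‖ * Real.exp ‖A‖ * ‖R‖ := by
    gcongr
    exact mul_le_of_le_one_left (norm_nonneg A) hδ.2.le
  have hI₀ : 0 ≤ ∫ s in (0 : ℝ)..T, ∫ ω, runningSup (fun u => ‖V u ω‖) s ∂P :=
    intervalIntegral.integral_nonneg hT.le fun s _ =>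
      integral_nonneg fun _ => runningSup_nonneg (fun _ => norm_nonneg _) s
  have hI := hV.intervalIntegral_integral_runningSup_le hT.le hΛ
  refine ⟨?_, ?_⟩
  · simp only [norm_neg]
    exact hV.integral_iSup_norm_intervalIntegral_le hT.le hC fun ω s hs =>
      (ContinuousLinearMap.le_opNorm _ _).trans <| mul_le_mul
        (norm_exp_smul_sub_one_mul_le A R (sub_mul_floor_div_mem_Icc hδ₀ s))
        (le_runningSup (hV.cont ω).norm (mul_floor_div_mem_Icc hδ₀ hs)) (norm_nonneg _) hC
  · calc _ ≤ δ * ‖A‖ * Real.exp ‖A‖ * ‖R‖ * ∫ s in (0 : ℝ)..T,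
          ∫ ω, runningSup (fun u => ‖V u ω‖) s ∂P := mul_le_mul_of_nonneg_right hC' hI₀
      -- `0 ≤ I ≤ 2/3 X` forces `0 ≤ X`, hence `I ≤ X`
      _ ≤ δ * ‖A‖ * Real.exp ‖A‖ * ‖R‖ * (Λ * √n * T ^ ((3 : ℝ) / 2)) :=
          mul_le_mul_of_nonneg_left (by linarith) (hC.trans hC')
      _ = _ := by ring

/-- `E[sup_{0≤t≤T}|L₃(t)|] ≤ δ|A|e^{δ|A|}|A⁻¹BK| ∫_0^T E[sup_{0≤u≤s}|V_u|] ds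
≤ δ|A|e^{|A|}|A⁻¹BK| Λ √n T^{3/2}`. -/
theorem L3_bound {Ω : Type*} [MeasurableSpace Ω]
    (P : Measure Ω) (n m : ℕ) (V : ℝ → Ω → Euc n) (hV : IsStdBrownianMotion P n V)
    (A : Mat n) (hA : IsUnit A) (B : Euc m →L[ℝ] Euc n) (K : Euc n →L[ℝ] Euc m)
    (δ ε : ℝ) (hδ : δ ∈ Set.Ioo (0:ℝ) 1) (hε : ε ∈ Set.Ioo (0:ℝ) 1)
    (T : ℝ) (hT : 0 < T) (Λ : ℝ) (hΛpos : 0 < Λ)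
    (hΛ : ∀ s ≥ (0:ℝ), (∫ ω, (⨆ u : Set.Icc (0:ℝ) s, ‖V u.1 ω‖) ∂P) ≤
      Λ * Real.sqrt (n * s)) :
    (∫ ω, (⨆ t : Set.Icc (0:ℝ) T,
        ‖-∫ s in (0:ℝ)..t.1,
            ((NormedSpace.exp ((s - δ * ↑⌊s / δ⌋) • A) - 1) *
              (Ring.inverse A * (B ∘L K))) (V (δ * ↑⌊s / δ⌋) ω)‖) ∂P) ≤
      δ * ‖A‖ * Real.exp (δ * ‖A‖) * ‖Ring.inverse A * (B ∘L K)‖ *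
        (∫ s in (0:ℝ)..T, ∫ ω, (⨆ u : Set.Icc (0:ℝ) s, ‖V u.1 ω‖) ∂P) ∧
    δ * ‖A‖ * Real.exp (δ * ‖A‖) * ‖Ring.inverse A * (B ∘L K)‖ *
        (∫ s in (0:ℝ)..T, ∫ ω, (⨆ u : Set.Icc (0:ℝ) s, ‖V u.1 ω‖) ∂P) ≤
      δ * ‖A‖ * Real.exp ‖A‖ * ‖Ring.inverse A * (B ∘L K)‖ * Λ * Real.sqrt n *
        T ^ ((3:ℝ) / 2) :=
  L3_bound_general P n m V hV A B K δ hδ T hT Λ hΛ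

end
end

section
/- Let A, BK ∈ ℝ^{n×n}, x(t) = e^{t(A−BK)}x₀, and for T > 0, 0 < ε, δ < 1 and c ≥ 0 define G₃(t) = (δ/(2ε)) ∫_0^t (A−BK)(x(π_δ(s)) − x(s)) ds and G₄(t) = (1/2)(δ/ε − c) ∫_0^t (A−BK) x(s) ds, with π_δ(s) = δ⌊s/δ⌋. If δ ≤ (c+1)ε, then sup_{0≤t≤T} |G₃(t)| ≤ (ε/2)(c+1)² |A−BK| e^{|A−BK|} |x₀| e^{|A−BK|T}, and sup_{0≤t≤T} |G₄(t)| ≤ (1/2)|δ/ε − c| · |x₀| · e^{|A−BK|T}. -/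
/- Write `x(s) = e^{sA} x₀`, so that `x' = A x` and `‖x(s)‖ ≤ e^{‖A‖ s} ‖x₀‖`. Both integrands
are then dominated by multiples of `‖A‖ e^{‖A‖ s}`, whose integral over `[0, t]` is
`e^{‖A‖ t} - 1 ≤ e^{‖A‖ T}`. For `G₄` the multiple is `‖x₀‖`. For `G₃`, since
`0 ≤ s - π_δ(s) < δ`, the fundamental theorem of calculus gives
`‖x(π_δ(s)) - x(s)‖ ≤ δ ‖A‖ e^{‖A‖ s} ‖x₀‖`, and `δ ≤ (c + 1) ε` turns the prefactor
`δ² / (2ε)` into `ε (c + 1)² / 2`. -/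

/- `ABK` denotes the matrix `A − BK` (a continuous linear endomorphism of
Euclidean space), `x(t) = e^{t(A−BK)} x₀`, `π_δ(s) = δ⌊s/δ⌋`, and
`G₃(t) = (δ/(2ε)) ∫_0^t (A−BK)(x(π_δ(s)) − x(s)) ds`,
`G₄(t) = (1/2)(δ/ε − c) ∫_0^t (A−BK) x(s) ds`. -/

noncomputable section

section

open Set NormedSpace

/- `‖1‖ ≤ 1` instead of `[NormOneClass 𝔸]`, so that it applies to `E →L[ℝ] E` also for trivial `E`. -/
theorem norm_exp_le_real_exp_norm {𝔸 : Type*} [NormedRing 𝔸] [NormedAlgebra ℝ 𝔸]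
    (h1 : ‖(1 : 𝔸)‖ ≤ 1) (a : 𝔸) : ‖exp a‖ ≤ Real.exp ‖a‖ := by
  have hpow : ∀ m : ℕ, ‖a ^ m‖ ≤ ‖a‖ ^ m
    | 0 => by simpa using h1
    | m + 1 => norm_pow_le' a m.succ_pos
  rw [exp_eq_tsum ℝ, Real.exp_eq_exp_ℝ, exp_eq_tsum_div]
  refine (norm_tsum_le_tsum_norm (norm_expSeries_summable' a)).trans <|
    (norm_expSeries_summable' a).tsum_le_tsum (fun m => ?_) (Real.summable_pow_div_factorial ‖a‖)
  rw [norm_smul, norm_inv, Real.norm_natCast, div_eq_inv_mul]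
  gcongr
  exact hpow m

theorem integral_mul_exp_mul (k t : ℝ) :
    ∫ s in (0:ℝ)..t, k * Real.exp (k * s) = Real.exp (k * t) - 1 := by
  have hderiv : ∀ s : ℝ, HasDerivAt (fun s => Real.exp (k * s)) (k * Real.exp (k * s)) s := by
    intro s
    simpa [mul_comm] using ((hasDerivAt_id s).const_mul k).exp
  rw [intervalIntegral.integral_eq_sub_of_hasDerivAt (fun s _ => hderiv s)
    ((by fun_prop : Continuous fun s => k * Real.exp (k * s)).intervalIntegrable _ _), mul_zero,
    Real.exp_zero]

variable {E : Type*} [NormedAddCommGroup E] [NormedSpace ℝ E]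

theorem norm_integral_le_of_norm_le_mul_exp {f : ℝ → E} {C k t : ℝ} (ht : 0 ≤ t)
    (hf : ∀ s ∈ Ioc 0 t, ‖f s‖ ≤ C * (k * Real.exp (k * s))) :
    ‖∫ s in (0:ℝ)..t, f s‖ ≤ C * (Real.exp (k * t) - 1) := by
  rw [← integral_mul_exp_mul, ← intervalIntegral.integral_const_mul]
  exact intervalIntegral.norm_integral_le_of_norm_le ht (.of_forall hf)
    ((by fun_prop : Continuous fun s => C * (k * Real.exp (k * s))).intervalIntegrable _ _)

theorem iSup_Icc_norm_smul_le {F : ℝ → E} {T K k : ℝ} (a : ℝ) (hK : 0 ≤ K) (hk : 0 ≤ k)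
    (hF : ∀ t ∈ Icc 0 T, ‖F t‖ ≤ K * (Real.exp (k * t) - 1)) :
    ⨆ t : Icc (0:ℝ) T, ‖a • F t‖ ≤ |a| * K * Real.exp (k * T) := by
  refine Real.iSup_le (fun ⟨t, ht⟩ => ?_) (by positivity)
  have hexp : Real.exp (k * t) ≤ Real.exp (k * T) := by gcongr; exact ht.2
  rw [norm_smul, Real.norm_eq_abs, mul_assoc]
  gcongr
  calc ‖F t‖ ≤ K * (Real.exp (k * t) - 1) := hF t ht
    _ ≤ K * Real.exp (k * T) := by gcongr; linarith

variable (A : E →L[ℝ] E) (x : E)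

theorem norm_exp_smul_apply_le {u s : ℝ} (hus : |u| ≤ s) :
    ‖exp (u • A) x‖ ≤ Real.exp (‖A‖ * s) * ‖x‖ := by
  refine ((exp (u • A)).le_opNorm x).trans ?_
  gcongr
  refine (norm_exp_le_real_exp_norm ContinuousLinearMap.norm_id_le _).trans ?_
  rw [Real.exp_le_exp, norm_smul, Real.norm_eq_abs, mul_comm]
  gcongr

theorem norm_apply_exp_smul_apply_le {s : ℝ} (hs : 0 ≤ s) :
    ‖A (exp (s • A) x)‖ ≤ ‖x‖ * (‖A‖ * Real.exp (‖A‖ * s)) := by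
  refine (A.le_opNorm _).trans ?_
  rw [mul_left_comm, mul_comm ‖x‖]
  gcongr
  exact norm_exp_smul_apply_le A x (abs_of_nonneg hs).le

theorem norm_integral_apply_exp_smul_apply_le {t : ℝ} (ht : 0 ≤ t) :
    ‖∫ s in (0:ℝ)..t, A (exp (s • A) x)‖ ≤ ‖x‖ * (Real.exp (‖A‖ * t) - 1) :=
  norm_integral_le_of_norm_le_mul_exp ht fun _ hs => norm_apply_exp_smul_apply_le A x hs.1.le

variable [CompleteSpace E]

theorem hasDerivAt_exp_smul_apply (t : ℝ) :
    HasDerivAt (fun u : ℝ => exp (u • A) x) (A (exp (t • A) x)) t := by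
  simpa using (hasDerivAt_exp_smul_const' (𝕂 := ℝ) A t).clm_apply (hasDerivAt_const t x)

theorem integral_apply_exp_smul_apply (a b : ℝ) :
    ∫ s in a..b, A (exp (s • A) x) = exp (b • A) x - exp (a • A) x := by
  have hcont : Continuous fun u : ℝ => exp (u • A) x :=
    continuous_iff_continuousAt.2 fun t => (hasDerivAt_exp_smul_apply A x t).continuousAt
  exact intervalIntegral.integral_eq_sub_of_hasDerivAt
    (fun u _ => hasDerivAt_exp_smul_apply A x u) ((A.continuous.comp hcont).intervalIntegrable _ _)

theorem norm_exp_smul_apply_sub_le {p s : ℝ} (hp : 0 ≤ p) (hps : p ≤ s) :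
    ‖exp (p • A) x - exp (s • A) x‖ ≤ (s - p) * (‖A‖ * Real.exp (‖A‖ * s) * ‖x‖) := by
  rw [← norm_neg, neg_sub, ← integral_apply_exp_smul_apply, mul_comm (s - p),
    ← abs_of_nonneg (sub_nonneg.2 hps)]
  refine intervalIntegral.norm_integral_le_of_norm_le_const fun u hu => ?_
  rw [uIoc_of_le hps] at hu
  refine (A.le_opNorm _).trans ?_
  rw [mul_assoc]
  gcongr
  exact norm_exp_smul_apply_le A x (by rw [abs_of_nonneg (hp.trans hu.1.le)]; exact hu.2)

theorem norm_apply_exp_floor_smul_sub_le {δ s : ℝ} (hδ : 0 < δ) (hs : 0 ≤ s) :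
    ‖A (exp ((δ * ⌊s / δ⌋) • A) x - exp (s • A) x)‖ ≤
      δ * ‖x‖ * ‖A‖ * (‖A‖ * Real.exp (‖A‖ * s)) := by
  have hgrid_nonneg : 0 ≤ δ * ⌊s / δ⌋ := by positivity
  have hgrid_le : δ * ⌊s / δ⌋ ≤ s := by
    linarith [Int.sub_floor_div_mul_nonneg s hδ, mul_comm δ (⌊s / δ⌋ : ℝ)]
  have hgrid_gap : s - δ * ⌊s / δ⌋ ≤ δ := by
    linarith [Int.sub_floor_div_mul_lt s hδ, mul_comm δ (⌊s / δ⌋ : ℝ)]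
  calc ‖A (exp ((δ * ⌊s / δ⌋) • A) x - exp (s • A) x)‖
      ≤ ‖A‖ * ((s - δ * ⌊s / δ⌋) * (‖A‖ * Real.exp (‖A‖ * s) * ‖x‖)) :=
        (A.le_opNorm _).trans <| by
          gcongr; exact norm_exp_smul_apply_sub_le A x hgrid_nonneg hgrid_le
    _ ≤ ‖A‖ * (δ * (‖A‖ * Real.exp (‖A‖ * s) * ‖x‖)) := by gcongr
    _ = δ * ‖x‖ * ‖A‖ * (‖A‖ * Real.exp (‖A‖ * s)) := by ring

theorem norm_integral_apply_exp_floor_smul_sub_le {δ t : ℝ} (hδ : 0 < δ) (ht : 0 ≤ t) :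
    ‖∫ s in (0:ℝ)..t, A (exp ((δ * ⌊s / δ⌋) • A) x - exp (s • A) x)‖ ≤
      δ * ‖x‖ * ‖A‖ * (Real.exp (‖A‖ * t) - 1) :=
  norm_integral_le_of_norm_le_mul_exp ht fun _ hs =>
    norm_apply_exp_floor_smul_sub_le A x hδ hs.1.le

end

theorem G34_bounds_general {n : ℕ} (ABK : Mat n) (x₀ : Euc n) (T : ℝ)
    (ε δ : ℝ) (hε : ε ∈ Set.Ioo (0:ℝ) 1) (hδ : δ ∈ Set.Ioo (0:ℝ) 1)
    (c : ℝ) (hδε : δ ≤ (c + 1) * ε) :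
    (⨆ t : Set.Icc (0:ℝ) T,
        ‖(δ / (2 * ε)) • ∫ s in (0:ℝ)..t.1,
            ABK (NormedSpace.exp ((δ * ↑⌊s / δ⌋) • ABK) x₀ -
              NormedSpace.exp (s • ABK) x₀)‖) ≤
      ε / 2 * (c + 1) ^ 2 * ‖ABK‖ * Real.exp ‖ABK‖ * ‖x₀‖ * Real.exp (‖ABK‖ * T) ∧
    (⨆ t : Set.Icc (0:ℝ) T,
        ‖((2:ℝ)⁻¹ * (δ / ε - c)) • ∫ s in (0:ℝ)..t.1,
            ABK (NormedSpace.exp (s • ABK) x₀)‖) ≤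
      1 / 2 * |δ / ε - c| * ‖x₀‖ * Real.exp (‖ABK‖ * T) := by
  obtain ⟨hε₀, -⟩ := hε
  obtain ⟨hδ₀, -⟩ := hδ
  have hexp : 1 ≤ Real.exp ‖ABK‖ := Real.one_le_exp (norm_nonneg _)
  have hcoeff : δ / (2 * ε) * δ ≤ ε / 2 * (c + 1) ^ 2 := by
    rw [div_mul_eq_mul_div, div_le_iff₀ (by positivity)]
    nlinarith
  constructor
  · refine (iSup_Icc_norm_smul_le _ (by positivity) (norm_nonneg _) fun t ht =>
      norm_integral_apply_exp_floor_smul_sub_le ABK x₀ hδ₀ ht.1).trans ?_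
    rw [abs_of_pos (by positivity)]
    calc δ / (2 * ε) * (δ * ‖x₀‖ * ‖ABK‖) * Real.exp (‖ABK‖ * T)
        = δ / (2 * ε) * δ * (‖ABK‖ * ‖x₀‖ * Real.exp (‖ABK‖ * T)) := by ring
      _ ≤ ε / 2 * (c + 1) ^ 2 * Real.exp ‖ABK‖ * (‖ABK‖ * ‖x₀‖ * Real.exp (‖ABK‖ * T)) := by
        gcongr ?_ * _
        exact hcoeff.trans (le_mul_of_one_le_right (by positivity) hexp)
      _ = _ := by ring
  · refine (iSup_Icc_norm_smul_le _ (norm_nonneg _) (norm_nonneg _) fun t ht =>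
      norm_integral_apply_exp_smul_apply_le ABK x₀ ht.1).trans_eq ?_
    rw [abs_mul, abs_of_pos (by norm_num : (0:ℝ) < 2⁻¹)]
    ring

/-- If `δ ≤ (c+1)ε` then
`sup_{0≤t≤T}|G₃(t)| ≤ (ε/2)(c+1)² ‖A−BK‖ e^{‖A−BK‖} ‖x₀‖ e^{‖A−BK‖T}` and
`sup_{0≤t≤T}|G₄(t)| ≤ (1/2)|δ/ε − c| ‖x₀‖ e^{‖A−BK‖T}`. -/
theorem G34_bounds {n : ℕ} (ABK : Mat n) (x₀ : Euc n) (T : ℝ) (hT : 0 < T)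
    (ε δ : ℝ) (hε : ε ∈ Set.Ioo (0:ℝ) 1) (hδ : δ ∈ Set.Ioo (0:ℝ) 1)
    (c : ℝ) (hc : 0 ≤ c) (hδε : δ ≤ (c + 1) * ε) :
    (⨆ t : Set.Icc (0:ℝ) T,
        ‖(δ / (2 * ε)) • ∫ s in (0:ℝ)..t.1,
            ABK (NormedSpace.exp ((δ * ↑⌊s / δ⌋) • ABK) x₀ -
              NormedSpace.exp (s • ABK) x₀)‖) ≤
      ε / 2 * (c + 1) ^ 2 * ‖ABK‖ * Real.exp ‖ABK‖ * ‖x₀‖ * Real.exp (‖ABK‖ * T) ∧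
    (⨆ t : Set.Icc (0:ℝ) T,
        ‖((2:ℝ)⁻¹ * (δ / ε - c)) • ∫ s in (0:ℝ)..t.1,
            ABK (NormedSpace.exp (s • ABK) x₀)‖) ≤
      1 / 2 * |δ / ε - c| * ‖x₀‖ * Real.exp (‖ABK‖ * T) :=
  G34_bounds_general ABK x₀ T ε δ hε hδ c hδε
end
end
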